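/- arXiv:1606.09329 — 2 statements merged into one kernel-verified Lean document; each statement's English description precedes it below -/
import Mathlib

section
/- Let A ∈ ℝ^{n×n}, B ∈ ℝ^{n×p}, let Q ∈ ℝ^{n×n} be symmetric positive definite, and let P ∈ ℝ^{n×n} be a symmetric positive definite solution of the algebraic Riccati equation PA + AᵀP − PBBᵀP + Q = 0. Then for every real c ≥ 1/2, the matrix PA + AᵀP − 2c·PBBᵀP is negative definite; more precisely PA + AᵀP − 2c·PBBᵀP ≤ −Q in the positive semidefinite (Loewner) order. -/
open Matrix

/-!
Eliminating `PA + AᵀP` with the Riccati equation gives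
`PA + AᵀP − 2c·PBBᵀP = −Q − (2c − 1)·PBBᵀP`, and `PBBᵀP = (PB)(PB)ᵀ` is positive
semidefinite, so both claims follow from `2c − 1 ≥ 0` and `Q > 0`.
-/

lemma sub_smul_eq_neg_sub_of_sub_add_eq_zero {R M : Type*} [Ring R] [AddCommGroup M]
    [Module R M] {X S Q : M} (h : X - S + Q = 0) (t : R) :
    X - t • S = -Q - (t - 1) • S := by
  obtain rfl : X = S - Q := by rw [← sub_eq_zero, ← h]; abel
  rw [sub_smul, one_smul]
  abel

lemma Matrix.IsHermitian.posSemidef_mul_mul_conjTranspose_mul {m n R : Type*} [Fintype m]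
    [Fintype n] [CommRing R] [PartialOrder R] [StarRing R] [StarOrderedRing R]
    {P : Matrix n n R} (hP : P.IsHermitian) (B : Matrix n m R) :
    (P * B * Bᴴ * P).PosSemidef := by
  have hfactor : P * B * Bᴴ * P = (P * B) * (P * B)ᴴ := by
    rw [conjTranspose_mul, hP.eq, Matrix.mul_assoc (P * B)]
  rw [hfactor]
  exact posSemidef_self_mul_conjTranspose (P * B)

/-- If `P > 0` solves the ARE `PA + AᵀP − PBBᵀP + Q = 0` with `Q > 0`, then for every
`c ≥ 1/2` the matrix `PA + AᵀP − 2c·PBBᵀP` is negative definite; more precisely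
`PA + AᵀP − 2c·PBBᵀP ≤ −Q` in the Loewner order (`−Q − X` is PSD). -/
theorem stmt_8 {n p : ℕ} (A : Matrix (Fin n) (Fin n) ℝ) (B : Matrix (Fin n) (Fin p) ℝ)
    (Q P : Matrix (Fin n) (Fin n) ℝ) (hQ : Q.PosDef) (hP : P.PosDef)
    (hric : P * A + Aᵀ * P - P * B * Bᵀ * P + Q = 0)
    (c : ℝ) (hc : 1 / 2 ≤ c) :
    (-Q - (P * A + Aᵀ * P - (2 * c) • (P * B * Bᵀ * P))).PosSemidef ∧
    (-(P * A + Aᵀ * P - (2 * c) • (P * B * Bᵀ * P))).PosDef := by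
  have hS : (P * B * Bᵀ * P).PosSemidef := by
    simpa only [conjTranspose_eq_transpose_of_trivial] using
      hP.isHermitian.posSemidef_mul_mul_conjTranspose_mul B
  have hcS : ((2 * c - 1) • (P * B * Bᵀ * P)).PosSemidef := hS.smul (by linarith)
  rw [sub_smul_eq_neg_sub_of_sub_add_eq_zero hric, sub_sub_cancel, neg_sub, sub_neg_eq_add,
    add_comm]
  exact ⟨hcS, hQ.add_posSemidef hcS⟩
end

section
/- Let A ∈ ℝ^{n×n}, B ∈ ℝ^{n×p}, let Q be symmetric positive definite, and let P be a symmetric positive definite solution of the algebraic Riccati equation PA + AᵀP − PBBᵀP + Q = 0. Set K = −BᵀP. Then A + BK is Hurwitz, i.e., every eigenvalue of A + BK has negative real part. -/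
open Matrix
open scoped ComplexOrder

/-!
With `M = A + BK`, the Riccati equation and `Pᵀ = P` give the Lyapunov equation
`PM + MᵀP = -(Q + KᵀK)`, whose right-hand side is negative definite. If `Mv = μv` with `v ≠ 0`
(over `ℂ`), evaluating both sides at `v` gives `2 Re μ · v*Pv = -v*(Q + KᵀK)v`, and since both
quadratic forms are positive, `Re μ < 0`.
-/

namespace Matrix

lemma closedLoop_lyapunov_of_riccati {R : Type*} [CommRing R] {n m : Type*} [Fintype n]
    [Fintype m] {A P Q : Matrix n n R} {B : Matrix n m R} {K : Matrix m n R} (hP : Pᵀ = P)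
    (hric : P * A + Aᵀ * P - P * B * Bᵀ * P + Q = 0) (hK : K = -(Bᵀ * P)) :
    P * (A + B * K) + (A + B * K)ᵀ * P = -(Q + Kᵀ * K) := by
  subst hK
  simp only [transpose_add, transpose_mul, transpose_neg, transpose_transpose, hP, Matrix.mul_add,
    Matrix.add_mul, Matrix.mul_neg, Matrix.neg_mul, neg_neg, Matrix.mul_assoc] at hric ⊢
  rw [← sub_eq_zero, ← hric]
  abel

section Complexification

variable {n : Type*} [Fintype n] {𝕜 : Type*} [RCLike 𝕜]

omit [Fintype n] in
lemma conjTranspose_map_algebraMap (M : Matrix n n ℝ) :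
    (M.map (algebraMap ℝ 𝕜))ᴴ = Mᵀ.map (algebraMap ℝ 𝕜) := by
  rw [← conjTranspose_map _ (algebraMap_star_comm (A := 𝕜)), conjTranspose_eq_transpose_of_trivial]

lemma PosSemidef.map_algebraMap {M : Matrix n n ℝ} (hM : M.PosSemidef) :
    (M.map (algebraMap ℝ 𝕜)).PosSemidef := by
  obtain ⟨m, v, rfl⟩ := posSemidef_iff_eq_sum_vecMulVec.mp hM
  have hmap : (∑ i, vecMulVec (v i) (star (v i))).map (algebraMap ℝ 𝕜)
      = ∑ i, vecMulVec (algebraMap ℝ 𝕜 ∘ v i) (star (algebraMap ℝ 𝕜 ∘ v i)) := by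
    ext j k
    simp [sum_apply, vecMulVec_apply]
  rw [hmap]
  exact posSemidef_sum _ fun i _ => posSemidef_vecMulVec_self_star _

lemma PosDef.map_algebraMap {M : Matrix n n ℝ} (hM : M.PosDef) :
    (M.map (algebraMap ℝ 𝕜)).PosDef := by
  classical
  rw [hM.posSemidef.map_algebraMap.posDef_iff_det_ne_zero, ← RingHom.mapMatrix_apply,
    ← RingHom.map_det]
  exact (map_ne_zero _).mpr hM.det_pos.ne'

variable [DecidableEq n]

lemma re_lt_zero_of_hasEigenvalue_of_lyapunov {M P S : Matrix n n 𝕜} (hP : P.PosDef)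
    (hS : S.PosDef) (hLyap : P * M + Mᴴ * P = -S) {μ : 𝕜}
    (hμ : Module.End.HasEigenvalue (toLin' M) μ) : RCLike.re μ < 0 := by
  obtain ⟨v, hv, hv0⟩ := hμ.exists_hasEigenvector
  have hMv : M *ᵥ v = μ • v := by simpa using Module.End.mem_eigenspace_iff.mp hv
  have hquad : star v ⬝ᵥ (P * M + Mᴴ * P) *ᵥ v = (μ + star μ) * (star v ⬝ᵥ P *ᵥ v) := by
    rw [add_mulVec, ← mulVec_mulVec, ← mulVec_mulVec, dotProduct_add, hMv,
      dotProduct_mulVec _ Mᴴ, vecMul_conjTranspose, star_star, hMv, star_smul, mulVec_smul,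
      dotProduct_smul, smul_dotProduct, smul_eq_mul, smul_eq_mul, add_mul]
  rw [hLyap, neg_mulVec, dotProduct_neg, RCLike.star_def, RCLike.add_conj] at hquad
  have hre := congrArg RCLike.re hquad
  rw [map_neg, mul_assoc, ← RCLike.ofReal_ofNat, RCLike.re_ofReal_mul, RCLike.re_ofReal_mul] at hre
  nlinarith [hP.re_dotProduct_pos hv0, hS.re_dotProduct_pos hv0]

lemma re_lt_zero_of_hasEigenvalue_map_of_lyapunov {M P S : Matrix n n ℝ} (hP : P.PosDef)
    (hS : S.PosDef) (hLyap : P * M + Mᵀ * P = -S) {μ : 𝕜}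
    (hμ : Module.End.HasEigenvalue (toLin' (M.map (algebraMap ℝ 𝕜))) μ) : RCLike.re μ < 0 := by
  refine re_lt_zero_of_hasEigenvalue_of_lyapunov hP.map_algebraMap hS.map_algebraMap ?_ hμ
  rw [conjTranspose_map_algebraMap]
  simpa only [map_add, map_mul, map_neg, RingHom.mapMatrix_apply] using
    congrArg (algebraMap ℝ 𝕜).mapMatrix hLyap

end Complexification

end Matrix

/-- If `P > 0` solves the ARE `PA + AᵀP − PBBᵀP + Q = 0` with `Q > 0` and `K = −BᵀP`,
then `A + BK` is Hurwitz: every complex eigenvalue has strictly negative real part. -/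
theorem stmt_9 {n p : ℕ} (A : Matrix (Fin n) (Fin n) ℝ) (B : Matrix (Fin n) (Fin p) ℝ)
    (Q P : Matrix (Fin n) (Fin n) ℝ) (hQ : Q.PosDef) (hP : P.PosDef)
    (hric : P * A + Aᵀ * P - P * B * Bᵀ * P + Q = 0)
    (K : Matrix (Fin p) (Fin n) ℝ) (hK : K = -(Bᵀ * P)) :
    ∀ μ : ℂ, Module.End.HasEigenvalue
      (Matrix.toLin' ((A + B * K).map (algebraMap ℝ ℂ))) μ → μ.re < 0 := by
  intro μ hμ
  have hPsymm : Pᵀ = P := by simpa using hP.isHermitian.eq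
  have hS : (Q + Kᵀ * K).PosDef :=
    hQ.add_posSemidef (by simpa using posSemidef_conjTranspose_mul_self K)
  exact re_lt_zero_of_hasEigenvalue_map_of_lyapunov hP hS
    (closedLoop_lyapunov_of_riccati hPsymm hric hK) hμ
end
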